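/- Every connected outerplanar graph G on n ≥ 3 vertices satisfies ρ(G) ≤ 3/2 + √(n - 7/4). -/

import Mathlib

open SimpleGraph Matrix

/-- `H` is a minor of `G`: branch sets are connected, pairwise disjoint, and
edges of `H` are represented by edges between branch sets. -/
def MinorOf {α : Type*} {β : Type*} (H : SimpleGraph α) (G : SimpleGraph β) : Prop :=
  ∃ f : α → Set β,
    (∀ a, (G.induce (f a)).Connected) ∧
    (Pairwise fun a b => Disjoint (f a) (f b)) ∧
    ∀ a b, H.Adj a b → ∃ u ∈ f a, ∃ v ∈ f b, G.Adj u v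

/-- A graph is outerplanar iff it has no `K₄`-minor and no `K_{2,3}`-minor. -/
def Outerplanar {β : Type*} (G : SimpleGraph β) : Prop :=
  ¬ MinorOf (completeGraph (Fin 4)) G ∧ ¬ MinorOf (completeBipartiteGraph (Fin 2) (Fin 3)) G

/-- The join `G ∨ H` of two graphs. -/
def graphJoin {α β : Type*} (G : SimpleGraph α) (H : SimpleGraph β) : SimpleGraph (α ⊕ β) where
  Adj x y :=
    match x, y with
    | Sum.inl a, Sum.inl b => G.Adj a b
    | Sum.inr a, Sum.inr b => H.Adj a b
    | Sum.inl _, Sum.inr _ => True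
    | Sum.inr _, Sum.inl _ => True
  symm := ⟨by rintro (a|a) (b|b) h <;> first | exact h.symm | trivial⟩
  loopless := ⟨by
    rintro (a|a) h
    · exact G.loopless.irrefl a h
    · exact H.loopless.irrefl a h⟩

open scoped Classical in
/-- The adjacency spectral radius of a finite graph. -/
noncomputable def specRad {V : Type*} [Fintype V] [DecidableEq V]
    (G : SimpleGraph V) : ℝ :=
  sSup (spectrum ℝ (G.adjMatrix ℝ))

/-- The disjoint union of paths with orders given by the list `L`. -/
def pathsUnion (L : List ℕ) : SimpleGraph (Σ i : Fin L.length, Fin (L.get i)) where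
  Adj x y := x.1 = y.1 ∧ (x.2.val + 1 = y.2.val ∨ y.2.val + 1 = x.2.val)
  symm := ⟨by rintro ⟨i, a⟩ ⟨j, b⟩ ⟨h1, h2⟩; exact ⟨h1.symm, h2.symm⟩⟩
  loopless := ⟨by rintro ⟨i, a⟩ ⟨-, h⟩; rcases h with h | h <;> omega⟩

/-- `B_{tl}`: `t` edge-disjoint `l`-cycles sharing exactly one common vertex (`none`). -/
def bouquet (t l : ℕ) : SimpleGraph (Option (Fin t × Fin (l - 1))) where
  Adj x y :=
    match x, y with
    | none, none => False
    | none, some p => p.2.val = 0 ∨ p.2.val = l - 2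
    | some p, none => p.2.val = 0 ∨ p.2.val = l - 2
    | some p, some q => p.1 = q.1 ∧ (p.2.val + 1 = q.2.val ∨ q.2.val + 1 = p.2.val)
  symm := ⟨by
    rintro (_|p) (_|q) h
    · exact h
    · exact h
    · exact h
    · exact ⟨h.1.symm, h.2.symm⟩⟩
  loopless := ⟨by
    rintro (_|p) h
    · exact h
    · rcases h.2 with h' | h' <;> omega⟩

/-- `F` occurs as a subgraph of `G`. -/
def ContainsSubgraph {α β : Type*} (F : SimpleGraph α) (G : SimpleGraph β) : Prop :=
  ∃ f : F →g G, Function.Injective f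

/-- `G` has a matching of size `k`. -/
def HasMatching {V : Type*} (G : SimpleGraph V) (k : ℕ) : Prop :=
  ∃ M : Finset (Sym2 V), M.card = k ∧ ↑M ⊆ G.edgeSet ∧
    (M : Set (Sym2 V)).Pairwise fun e f => ∀ v, v ∈ e → v ∉ f

/-- A linear forest: a disjoint union of (possibly trivial) paths. -/
def IsLinearForest {V : Type*} (H : SimpleGraph V) : Prop :=
  H.IsAcyclic ∧ ∀ v, (H.neighborSet v).ncard ≤ 2

/-- `G` contains a cycle of length `l`. -/
def HasCycleLength {V : Type*} (G : SimpleGraph V) (l : ℕ) : Prop :=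
  ∃ (u : V) (w : G.Walk u u), w.IsCycle ∧ w.length = l

/-!
Let `A` be the neighbourhood of a vertex `u` and `R` the set of vertices other than `u` outside
`A`. An edge at `v ∈ A` goes to `u`, into `A`, or into `R`. The edges inside `A` form a forest,
since a cycle there contracts together with `u` to `K₄`; the edges between `A` and `R` form a
forest too, since a cycle there alternates between `A` and `R` and contracts together with `u`
to `K_{2,3}`. Counting the edges of the two forests gives `∑_{v ∼ u} d_v ≤ 3 d_u + n - 4`.
For `c = √(n - 7/4) - 3/2` one has `c (3 + c) = n - 4`, so the positive vector `d_v + c`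
satisfies `A x ≤ (3 + c) x`, and the Collatz–Wielandt bound gives `ρ(G) ≤ 3 + c`.
-/

open Finset

namespace SimpleGraph

variable {V : Type*} {G : SimpleGraph V}

theorem IsAcyclic.card_edgeFinset_add_one_le [Fintype V] [DecidableRel G.Adj] (hG : G.IsAcyclic)
    {s : Finset V} (hs : s.Nonempty) (hsupp : G.support ⊆ s) :
    #G.edgeFinset + 1 ≤ #s := by
  classical
  have := hs.coe_sort
  obtain ⟨T, hle, -, hT⟩ :=
    (connected_top (V := s)).exists_isTree_le_of_le_of_isAcyclic le_top (hG.induce s)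
  calc #G.edgeFinset + 1 = #(G.induce s).edgeFinset + 1 := by
        congr 1; convert (card_edgeFinset_induce_of_support_subset hsupp).symm
    _ ≤ #T.edgeFinset + 1 := by grw [edgeFinset_mono hle]
    _ = #s := by rw [hT.card_edgeFinset, Fintype.card_coe]

theorem connected_induce_singleton (v : V) : (G.induce {v}).Connected :=
  ⟨.of_subsingleton⟩

theorem Walk.IsPath.notMem_support_dropLast {u v : V} {p : G.Walk u v} (hp : p.IsPath)
    (hnil : ¬p.Nil) : v ∉ p.dropLast.support := by
  have hnd := hp.support_nodup
  rw [← support_dropLast_concat hnil, List.nodup_append] at hnd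
  exact fun hv => hnd.2.2 v hv v (List.mem_singleton_self v) rfl

theorem Walk.support_dropLast_subset {u v : V} {p : G.Walk u v} (hnil : ¬p.Nil) :
    p.dropLast.support ⊆ p.support := by
  rw [support_dropLast hnil]
  exact List.dropLast_subset _

theorem minorOf_completeGraph_four {u x y a b : V} (p : G.Walk a b) (hux : G.Adj u x)
    (huy : G.Adj u y) (hxy : G.Adj x y) (hua : G.Adj u a) (hxb : G.Adj x b) (hya : G.Adj y a)
    (hu : u ∉ p.support) (hx : x ∉ p.support) (hy : y ∉ p.support) :
    MinorOf (completeGraph (Fin 4)) G := by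
  refine ⟨![{u}, {x}, {y}, {w | w ∈ p.support}], fun i => ?_, fun i j hij => ?_, fun i j hij => ?_⟩
  · fin_cases i
    exacts [connected_induce_singleton u, connected_induce_singleton x,
      connected_induce_singleton y, p.connected_induce_support]
  · fin_cases i <;> fin_cases j <;> simp_all [ne_comm, hux.ne, huy.ne, hxy.ne]
  · fin_cases i <;> fin_cases j <;> simp at hij ⊢ <;>
      solve_by_elim [G.adj_symm, Exists.intro, And.intro, p.start_mem_support, p.end_mem_support]

theorem minorOf_completeBipartiteGraph_two_three {x y₀ y₁ y₂ a b : V} (p : G.Walk a b)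
    (hxy₀ : G.Adj x y₀) (hxy₁ : G.Adj x y₁) (hxy₂ : G.Adj x y₂)
    (hay₀ : G.Adj a y₀) (hay₁ : G.Adj a y₁) (hby₂ : G.Adj b y₂)
    (hy₀₁ : y₀ ≠ y₁) (hy₀₂ : y₀ ≠ y₂) (hy₁₂ : y₁ ≠ y₂)
    (hx : x ∉ p.support) (hy₀ : y₀ ∉ p.support) (hy₁ : y₁ ∉ p.support) (hy₂ : y₂ ∉ p.support) :
    MinorOf (completeBipartiteGraph (Fin 2) (Fin 3)) G := by
  refine ⟨Sum.elim ![{x}, {w | w ∈ p.support}] ![{y₀}, {y₁}, {y₂}],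
    fun i => ?_, fun i j hij => ?_, fun i j hij => ?_⟩
  · rcases i with i | i <;> fin_cases i
    exacts [connected_induce_singleton x, p.connected_induce_support,
      connected_induce_singleton y₀, connected_induce_singleton y₁, connected_induce_singleton y₂]
  · rcases i with i | i <;> rcases j with j | j <;> fin_cases i <;> fin_cases j <;>
      simp_all [ne_comm, hxy₀.ne, hxy₁.ne, hxy₂.ne]
  · rcases i with i | i <;> rcases j with j | j <;> fin_cases i <;> fin_cases j <;>
      simp at hij ⊢ <;>
      solve_by_elim [G.adj_symm, Exists.intro, And.intro, p.start_mem_support, p.end_mem_support]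

/-- Branch sets `{u}`, `{v₀}`, `{v₁}` and the path `v₂ ⋯ v_{k-1}` of the cycle `v₀ ⋯ v_{k-1}`. -/
theorem Walk.IsCycle.minorOf_completeGraph_four {u v : V} {c : G.Walk v v} (hc : c.IsCycle)
    (hu : u ∉ c.support) (h₀ : G.Adj u v) (h₁ : G.Adj u (c.getVert 1))
    (h₂ : G.Adj u (c.getVert 2)) : MinorOf (completeGraph (Fin 4)) G := by
  cases c with
  | nil => exact absurd hc not_isCycle_nil
  | cons h₀₁ p =>
  cases p with
  | nil => exact absurd h₀₁ (G.loopless.irrefl v)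
  | cons h₁₂ q =>
  have hnil : ¬q.Nil := by
    have := hc.three_le_length
    rw [Walk.not_nil_iff_lt_length]
    simp only [length_cons] at this
    omega
  rw [cons_isCycle_iff, cons_isPath_iff] at hc
  obtain ⟨⟨hq, hv₁⟩, -⟩ := hc
  simp only [support_cons, List.mem_cons, not_or] at hu
  simp only [getVert_cons_succ, getVert_zero] at h₁ h₂
  have hsub := support_dropLast_subset hnil
  exact SimpleGraph.minorOf_completeGraph_four q.dropLast h₀ h₁ h₀₁ h₂
    (q.adj_penultimate hnil).symm h₁₂ (fun h => hu.2.2 (hsub h))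
    (hq.notMem_support_dropLast hnil) (fun h => hv₁ (hsub h))

/-- Branch sets `{v₁}`, `v₃ ⋯ v_{k-1}` and `{u}`, `{v₂}`, `{v₀}` for the cycle `v₀ ⋯ v_{k-1}`. -/
theorem Walk.IsCycle.minorOf_completeBipartiteGraph_two_three {u v : V} {c : G.Walk v v}
    (hc : c.IsCycle) (hu : u ∉ c.support) (h₁ : G.Adj u (c.getVert 1))
    (h₃ : G.Adj u (c.getVert 3)) (hne : c.getVert 3 ≠ v) :
    MinorOf (completeBipartiteGraph (Fin 2) (Fin 3)) G := by
  cases c with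
  | nil => exact absurd hc not_isCycle_nil
  | cons h₀₁ p =>
  cases p with
  | nil => exact absurd h₀₁ (G.loopless.irrefl v)
  | cons h₁₂ p =>
  cases p with
  | nil => exact absurd hc.three_le_length (by simp)
  | cons h₂₃ q =>
  simp only [getVert_cons_succ, getVert_zero] at h₁ h₃ hne
  have hnil : ¬q.Nil := fun h => hne h.eq
  rw [cons_isCycle_iff, cons_isPath_iff, cons_isPath_iff] at hc
  obtain ⟨⟨⟨hq, hv₂⟩, hv₁⟩, -⟩ := hc
  simp only [support_cons, List.mem_cons, not_or] at hu hv₁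
  have hsub := support_dropLast_subset hnil
  exact SimpleGraph.minorOf_completeBipartiteGraph_two_three q.dropLast h₁.symm h₁₂ h₀₁.symm
    h₃.symm h₂₃.symm (q.adj_penultimate hnil) hu.2.2.1 hu.1
    (fun h => hv₂ (h ▸ q.end_mem_support)) (fun h => hv₁.2 (hsub h))
    (fun h => hu.2.2.2 (hsub h)) (fun h => hv₂ (hsub h)) (hq.notMem_support_dropLast hnil)

@[simps]
def linkGraph (G : SimpleGraph V) (u : V) : SimpleGraph V where
  Adj x y := G.Adj x y ∧ G.Adj u x ∧ G.Adj u y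
  symm := ⟨fun _ _ h => ⟨h.1.symm, h.2.2, h.2.1⟩⟩
  loopless := ⟨fun _ h => G.loopless.irrefl _ h.1⟩

@[simps]
def cutGraph (G : SimpleGraph V) (u : V) : SimpleGraph V where
  Adj x y := G.Adj x y ∧ x ≠ u ∧ y ≠ u ∧ (G.Adj u x ↔ ¬G.Adj u y)
  symm := ⟨fun _ _ h => ⟨h.1.symm, h.2.2.1, h.2.1, by tauto⟩⟩
  loopless := ⟨fun _ h => G.loopless.irrefl _ h.1⟩

instance [DecidableRel G.Adj] (u : V) : DecidableRel (G.linkGraph u).Adj :=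
  fun x y => inferInstanceAs (Decidable (G.Adj x y ∧ G.Adj u x ∧ G.Adj u y))

instance [DecidableEq V] [DecidableRel G.Adj] (u : V) : DecidableRel (G.cutGraph u).Adj :=
  fun x y => inferInstanceAs (Decidable (G.Adj x y ∧ x ≠ u ∧ y ≠ u ∧ (G.Adj u x ↔ ¬G.Adj u y)))

theorem linkGraph_le (G : SimpleGraph V) (u : V) : G.linkGraph u ≤ G :=
  fun _ _ h => (linkGraph_adj G u _ _).mp h |>.1

theorem cutGraph_le (G : SimpleGraph V) (u : V) : G.cutGraph u ≤ G :=
  fun _ _ h => (cutGraph_adj G u _ _).mp h |>.1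

theorem support_linkGraph_subset (G : SimpleGraph V) (u : V) :
    (G.linkGraph u).support ⊆ G.neighborSet u :=
  fun _ ⟨_, h⟩ => (linkGraph_adj G u _ _).mp h |>.2.1

theorem support_cutGraph_subset (G : SimpleGraph V) (u : V) :
    (G.cutGraph u).support ⊆ {u}ᶜ :=
  fun _ ⟨_, h⟩ => (cutGraph_adj G u _ _).mp h |>.2.1

theorem cutGraph_isBipartiteWith (G : SimpleGraph V) (u : V) :
    (G.cutGraph u).IsBipartiteWith (G.neighborSet u) {x | x ≠ u ∧ ¬G.Adj u x} where
  disjoint := Set.disjoint_left.mpr fun _ hx hx' => hx'.2 hx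
  mem_of_adj _ _ h := by
    obtain ⟨-, hx, hy, hxy⟩ := (cutGraph_adj G u _ _).mp h
    simp only [mem_neighborSet, Set.mem_ofPred_eq]
    tauto

theorem isAcyclic_linkGraph (h : ¬MinorOf (completeGraph (Fin 4)) G) (u : V) :
    (G.linkGraph u).IsAcyclic := by
  intro v c hc
  have hadj : ∀ w ∈ c.support, G.Adj u w := fun w hw =>
    support_linkGraph_subset G u (mem_support_of_mem_walk_support c hc.not_nil hw)
  refine h ((hc.mapLe (linkGraph_le G u)).minorOf_completeGraph_four (u := u) ?_ ?_ ?_ ?_)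
  · rw [Walk.support_mapLe_eq_support]
    exact fun hu => G.loopless.irrefl u (hadj u hu)
  · exact hadj v c.start_mem_support
  all_goals rw [Walk.getVert_map]; exact hadj _ (c.getVert_mem_support _)

theorem isAcyclic_cutGraph (h : ¬MinorOf (completeBipartiteGraph (Fin 2) (Fin 3)) G) (u : V) :
    (G.cutGraph u).IsAcyclic := by
  classical
  intro v c hc
  -- Restart the cycle outside `N(u)`; its vertices then alternate between outside and inside.
  obtain ⟨w, hw, hwu⟩ : ∃ w ∈ c.support, ¬G.Adj u w := by
    by_cases hv : G.Adj u v
    · have h₀₁ := c.adj_getVert_succ (i := 0) (by have := hc.three_le_length; omega)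
      have := ((cutGraph_adj G u _ _).mp h₀₁).2.2.2
      exact ⟨_, c.getVert_mem_support 1, by simp_all⟩
    · exact ⟨v, c.start_mem_support, hv⟩
  set d := c.rotate w hw
  have hd : d.IsCycle := hc.rotate hw
  have hlen := hd.three_le_length
  have halt : ∀ i < d.length, (G.Adj u (d.getVert i) ↔ ¬G.Adj u (d.getVert (i + 1))) :=
    fun i hi => ((cutGraph_adj G u _ _).mp (d.adj_getVert_succ hi)).2.2.2
  have h₁ : G.Adj u (d.getVert 1) := by have := halt 0 (by omega); simp_all
  have h₂ : ¬G.Adj u (d.getVert 2) := (halt 1 (by omega)).mp h₁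
  have h₃ : G.Adj u (d.getVert 3) := by have := halt 2 (by omega); tauto
  refine h ((hd.mapLe (cutGraph_le G u)).minorOf_completeBipartiteGraph_two_three (u := u)
    ?_ ?_ ?_ ?_) <;> simp only [Walk.support_mapLe_eq_support, Walk.getVert_map]
  · exact fun hu =>
      support_cutGraph_subset G u (mem_support_of_mem_walk_support d hd.not_nil hu) rfl
  · exact h₁
  · exact h₃
  · exact fun h₃w => hwu (h₃w ▸ h₃)

theorem degree_eq_one_add_degree_linkGraph_add_degree_cutGraph [Fintype V] [DecidableEq V]
    [DecidableRel G.Adj] {u v : V} (huv : G.Adj u v) :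
    G.degree v = 1 + (G.linkGraph u).degree v + (G.cutGraph u).degree v := by
  simp only [← card_neighborFinset_eq_degree, neighborFinset_eq_filter, card_filter]
  rw [← Fintype.sum_ite_eq' u fun _ => 1, ← sum_add_distrib, ← sum_add_distrib]
  refine sum_congr rfl fun w _ => ?_
  by_cases hw : w = u
  · subst hw; simp [huv.symm]
  · by_cases hvw : G.Adj v w <;> by_cases huw : G.Adj u w <;> simp [*, huv.ne']

end SimpleGraph

namespace Matrix

variable {ι : Type*} [Fintype ι] [DecidableEq ι]

theorem le_of_mem_spectrum_of_mulVec_le {M : Matrix ι ι ℝ} (hM : ∀ i j, 0 ≤ M i j) {z : ι → ℝ}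
    (hz : ∀ i, 0 < z i) {μ : ℝ} (h : M *ᵥ z ≤ μ • z) {θ : ℝ} (hθ : θ ∈ spectrum ℝ M) :
    θ ≤ μ := by
  rw [← spectrum_toLin', ← Module.End.hasEigenvalue_iff_mem_spectrum] at hθ
  obtain ⟨y, hy⟩ := hθ.exists_hasEigenvector
  rw [Module.End.hasEigenvector_iff, Module.End.mem_eigenspace_iff, toLin'_apply] at hy
  obtain ⟨hMy, hy0⟩ := hy
  obtain ⟨j, hj⟩ := Function.ne_iff.mp hy0
  obtain ⟨i, -, hi⟩ := exists_max_image univ (fun i => |y i| / z i) ⟨j, mem_univ j⟩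
  set t := |y i| / z i
  have hyt : ∀ k, |y k| ≤ t * z k := fun k => (div_le_iff₀ (hz k)).mp (hi k (mem_univ k))
  have hyi : 0 < |y i| := by
    have := (div_pos (abs_pos.mpr hj) (hz j)).trans_le (hi j (mem_univ j))
    exact (div_pos_iff_of_pos_right (hz i)).mp this
  have ht : t * z i = |y i| := div_mul_cancel₀ _ (hz i).ne'
  suffices |θ| * |y i| ≤ μ * |y i| from (le_abs_self θ).trans (le_of_mul_le_mul_right this hyi)
  calc |θ| * |y i| = |∑ k, M i k * y k| := by
        rw [← abs_mul, ← smul_eq_mul, ← Pi.smul_apply, ← hMy]; rfl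
    _ ≤ ∑ k, M i k * |y k| := by
        refine (abs_sum_le_sum_abs _ _).trans_eq (sum_congr rfl fun k _ => ?_)
        rw [abs_mul, abs_of_nonneg (hM i k)]
    _ ≤ ∑ k, M i k * (t * z k) := sum_le_sum fun k _ => mul_le_mul_of_nonneg_left (hyt k) (hM i k)
    _ = t * (M *ᵥ z) i := by
        simp only [mulVec, dotProduct, mul_sum]; exact sum_congr rfl fun k _ => by ring
    _ ≤ t * (μ * z i) := mul_le_mul_of_nonneg_left (h i) (div_nonneg (abs_nonneg _) (hz i).le)
    _ = μ * |y i| := by rw [← ht]; ring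

end Matrix

section

variable {V : Type*} [Fintype V] [DecidableEq V] {G : SimpleGraph V} [DecidableRel G.Adj]

theorem Outerplanar.sum_degree_neighborFinset_add_four_le (hG : Outerplanar G) {u : V}
    (hu : 0 < G.degree u) :
    ∑ v ∈ G.neighborFinset u, G.degree v + 4 ≤ 3 * G.degree u + Fintype.card V := by
  set A := G.neighborFinset u
  have hA : A.Nonempty := card_pos.mp (by rwa [card_neighborFinset_eq_degree])
  have hsplit : ∑ v ∈ A, G.degree v =
      #A + ∑ v ∈ A, (G.linkGraph u).degree v + ∑ v ∈ A, (G.cutGraph u).degree v := by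
    rw [sum_congr rfl fun v hv => degree_eq_one_add_degree_linkGraph_add_degree_cutGraph
      ((mem_neighborFinset G u v).mp hv), sum_add_distrib, sum_add_distrib, card_eq_sum_ones]
  have hlink : ∑ v ∈ A, (G.linkGraph u).degree v + 2 ≤ 2 * #A := by
    have hsupp : (G.linkGraph u).support ⊆ A := by simpa [A] using support_linkGraph_subset G u
    have := IsAcyclic.card_edgeFinset_add_one_le (isAcyclic_linkGraph hG.1 u) hA hsupp
    rw [sum_subset (subset_univ A) fun v _ hv => (degree_eq_zero_iff_notMem_support _ _).mpr
      fun h => hv (hsupp h), sum_degrees_eq_twice_card_edges]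
    omega
  have hcut : ∑ v ∈ A, (G.cutGraph u).degree v + 2 ≤ Fintype.card V := by
    have hbip : (G.cutGraph u).IsBipartiteWith A ({x | x ≠ u ∧ ¬G.Adj u x} : Finset V) := by
      simpa [A] using cutGraph_isBipartiteWith G u
    have := IsAcyclic.card_edgeFinset_add_one_le (isAcyclic_cutGraph hG.2 u) (s := {u}ᶜ)
      (hA.mono fun w hw => by simpa using (G.ne_of_adj ((mem_neighborFinset G u w).mp hw)).symm)
      (by simpa using support_cutGraph_subset G u)
    rw [isBipartiteWith_sum_degrees_eq_card_edges hbip]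
    rw [card_compl, card_singleton] at this
    have := Fintype.card_pos_iff.mpr ⟨u⟩
    omega
  have : #A = G.degree u := card_neighborFinset_eq_degree G u
  omega

theorem specRad_le_of_sum_degree_le {a b c : ℝ}
    (hb : c * (a + c) = b) (hac : 0 ≤ a + c) (hpos : ∀ v, 0 < (G.degree v : ℝ) + c)
    (h : ∀ v, ∑ w ∈ G.neighborFinset v, (G.degree w : ℝ) ≤ a * G.degree v + b) :
    specRad G ≤ a + c := by
  -- `specRad` is defined through the classical decidability instance
  obtain rfl : ‹DecidableRel G.Adj› = fun _ _ => Classical.propDecidable _ := Subsingleton.elim _ _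
  refine Real.sSup_le (fun θ hθ => ?_) hac
  refine Matrix.le_of_mem_spectrum_of_mulVec_le (fun i j => ?_) hpos (fun v => ?_) hθ
  · rw [adjMatrix_apply]
    split_ifs <;> norm_num
  · rw [adjMatrix_mulVec_apply, sum_add_distrib, sum_const, card_neighborFinset_eq_degree,
      nsmul_eq_mul, Pi.smul_apply, smul_eq_mul]
    linarith [h v]

end

theorem outerplanar_spectral_bound {V : Type*} [Fintype V] [DecidableEq V]
    (G : SimpleGraph V) (hconn : G.Connected) (hop : Outerplanar G) (n : ℕ)
    (hn : Fintype.card V = n) (h3 : 3 ≤ n) :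
    specRad G ≤ 3 / 2 + Real.sqrt ((n : ℝ) - 7 / 4) := by
  classical
  have : Nontrivial V := Fintype.one_lt_card_iff_nontrivial.mp (by omega)
  have hdeg (v : V) : 0 < G.degree v := hconn.preconnected.degree_pos_of_nontrivial v
  have hsum (v : V) : ∑ w ∈ G.neighborFinset v, (G.degree w : ℝ) ≤ 3 * G.degree v + (n - 4) := by
    have := hop.sum_degree_neighborFinset_add_four_le (hdeg v)
    rw [hn] at this
    have : (∑ w ∈ G.neighborFinset v, G.degree w : ℝ) + 4 ≤ 3 * G.degree v + n := by
      exact_mod_cast this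
    linarith
  have hn3 : (3 : ℝ) ≤ n := by exact_mod_cast h3
  have hs : √((n : ℝ) - 7 / 4) ^ 2 = n - 7 / 4 := Real.sq_sqrt (by linarith)
  have hs1 : 1 ≤ √((n : ℝ) - 7 / 4) := Real.one_le_sqrt.mpr (by linarith)
  calc specRad G ≤ 3 + (√((n : ℝ) - 7 / 4) - 3 / 2) :=
        specRad_le_of_sum_degree_le (by linear_combination hs) (by linarith)
          (fun v => by linarith [(Nat.one_le_cast.mpr (hdeg v) : (1 : ℝ) ≤ G.degree v)]) hsum
    _ = 3 / 2 + √((n : ℝ) - 7 / 4) := by ring
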